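/- Let f ∈ F[x] be written as f = ∑_{i=1}^s α_i (x - a_i)^{e_i} with α_i ∈ F nonzero and the a_i ∈ F all distinct. Suppose f satisfies an SDE of order k and shift l, namely ∑_{j=0}^k P_j(x) f^{(j)}(x) = 0 with deg(P_j) ≤ j + l and not all P_j zero. Then for every i such that e_i ≥ k + (k+l)(s−1) + C(s,2), the polynomial (x - a_i)^{e_i} satisfies the same SDE. -/

import Mathlib

/-!
Let `L` be the operator of the SDE and `hⱼ = αⱼ L((x - aⱼ)^{eⱼ})`. Then `∑ hⱼ = L f = 0`,
`(x - aⱼ)^{eⱼ - k}` divides `hⱼ` and `deg hⱼ ≤ eⱼ + l`. If `hᵢ ≠ 0`, it lies in the span of a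
linearly independent subfamily of `b ≤ s - 1` of the other `hⱼ`. In characteristic zero their
Wronskian `W` is nonzero. It is divisible by `(x - aⱼ)^{eⱼ - k - (b - 1)}` for every member of the
subfamily and, since replacing one row by `hᵢ` only rescales `W`, also by
`(x - aᵢ)^{eᵢ - k - (b - 1)}`; on the other hand `deg W ≤ ∑ (eⱼ + l) - C(b, 2)`. Comparing the
two bounds gives `eᵢ < k + b (k + l) + C(b + 1, 2) ≤ k + (k + l)(s - 1) + C(s, 2)`.
-/

open Polynomial Finset

theorem Fin.sum_val_eq_choose_two (n : ℕ) : ∑ t : Fin n, (t : ℕ) = n.choose 2 := by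
  rw [Fin.sum_univ_eq_sum_range (fun t => t) n, sum_range_id, Nat.choose_two_right]

theorem Fin.sum_sub_val_add_choose_two_eq {n : ℕ} (D : Fin n → ℕ) (σ : Equiv.Perm (Fin n))
    (h : ∀ t : Fin n, (t : ℕ) ≤ D (σ t)) : ∑ t : Fin n, (D (σ t) - t) + n.choose 2 = ∑ r, D r := by
  rw [← Fin.sum_val_eq_choose_two, ← sum_add_distrib, ← Equiv.sum_comp σ D]
  exact sum_congr rfl fun t _ => Nat.sub_add_cancel (h t)

theorem LinearIndependent.update_sub_smul {R ι M : Type*} [CommRing R] [DecidableEq ι]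
    [AddCommGroup M] [Module R M] {v : ι → M} (hv : LinearIndependent R v) {p r : ι}
    (hpr : p ≠ r) (c : R) :
    LinearIndependent R (Function.update v p (v p - c • v r)) := by
  refine hv.update p _ ⟨1, one_mem _, Finsupp.single p 1 - Finsupp.single r c, ?_, ?_⟩
  · simp [Finsupp.single_eq_of_ne hpr]
  · simp [Finsupp.linearCombination_single]

theorem exists_linearIndependent_fin_of_mem_span {K V ι : Type*} [DivisionRing K]
    [AddCommGroup V] [Module K V] [Finite ι] {w : ι → V} {x : V}
    (hx : x ∈ Submodule.span K (Set.range w)) :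
    ∃ (b : ℕ) (g : Fin b → ι), Function.Injective g ∧ LinearIndependent K (w ∘ g) ∧
      x ∈ Submodule.span K (Set.range (w ∘ g)) := by
  obtain ⟨κ, c, hc, hspan, hli⟩ := exists_linearIndependent' K w
  have : Finite κ := Finite.of_injective c hc
  let e := Finite.equivFin κ
  refine ⟨_, c ∘ e.symm, hc.comp e.symm.injective, hli.comp _ e.symm.injective, ?_⟩
  rwa [← Function.comp_assoc, EquivLike.range_comp, hspan]

theorem mem_span_range_subtype_ne_of_sum_eq_zero {R M ι : Type*} [Ring R] [AddCommGroup M]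
    [Module R M] [Fintype ι] [DecidableEq ι] {w : ι → M} (hw : ∑ j, w j = 0) (i : ι) :
    w i ∈ Submodule.span R (Set.range fun j : {j // j ≠ i} => w j) := by
  rw [Fintype.sum_eq_add_sum_subtype_ne _ i, add_eq_zero_iff_eq_neg] at hw
  rw [hw]
  exact neg_mem (Submodule.sum_mem _ fun j _ => Submodule.subset_span ⟨j, rfl⟩)

namespace Polynomial

section CommRing

variable {R : Type*} [CommRing R] {n : ℕ}

theorem coeff_prod_sum_of_natDegree_le {ι : Type*} (s : Finset ι) (f : ι → R[X]) (d : ι → ℕ)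
    (h : ∀ i ∈ s, (f i).natDegree ≤ d i) :
    (∏ i ∈ s, f i).coeff (∑ i ∈ s, d i) = ∏ i ∈ s, (f i).coeff (d i) := by
  classical
  induction s using Finset.induction_on with
  | empty => simp
  | insert x s hx ih =>
    have hs : ∀ i ∈ s, (f i).natDegree ≤ d i := fun i hi => h i (mem_insert_of_mem hi)
    rw [prod_insert hx, sum_insert hx, prod_insert hx,
      coeff_mul_add_eq_of_natDegree_le (h x (mem_insert_self x s))
        ((natDegree_prod_le _ _).trans (sum_le_sum hs)), ih hs]

theorem coeff_iterate_derivative_natDegree_sub (p : R[X]) (t : ℕ) :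
    (derivative^[t] p).coeff (p.natDegree - t) =
      (p.natDegree.descFactorial t : R) * p.leadingCoeff := by
  rcases le_or_gt t p.natDegree with ht | ht
  · rw [coeff_iterate_derivative, Nat.sub_add_cancel ht, nsmul_eq_mul]
    rfl
  · rw [iterate_derivative_eq_zero ht, Nat.descFactorial_eq_zero_iff_lt.mpr ht]
    simp

noncomputable def wronskianMatrix (v : Fin n → R[X]) : Matrix (Fin n) (Fin n) R[X] :=
  Matrix.of fun r t => derivative^[t] (v r)

noncomputable def wronskianDet (v : Fin n → R[X]) : R[X] :=
  (wronskianMatrix v).det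

theorem wronskianDet_eq_sum (v : Fin n → R[X]) :
    wronskianDet v = ∑ σ : Equiv.Perm (Fin n),
      Equiv.Perm.sign σ • ∏ t : Fin n, derivative^[t] (v (σ t)) :=
  Matrix.det_apply _

theorem wronskianMatrix_update (v : Fin n → R[X]) (p : Fin n) (q : R[X]) :
    wronskianMatrix (Function.update v p q) =
      (wronskianMatrix v).updateRow p fun t => derivative^[t] q := by
  ext r t
  rcases eq_or_ne r p with rfl | h
  · simp [wronskianMatrix]
  · simp [wronskianMatrix, h]

theorem wronskianDet_update_of_eq_sum (v : Fin n → R[X]) (p : Fin n) (c : Fin n → R)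
    (q : R[X]) (hq : q = ∑ r, c r • v r) :
    wronskianDet (Function.update v p q) = C (c p) * wronskianDet v := by
  have hrow : (fun t : Fin n => derivative^[t] q) = ∑ r, C (c r) • wronskianMatrix v r := by
    ext1 t
    simp [hq, wronskianMatrix, iterate_derivative_sum, smul_eq_C_mul]
  rw [wronskianDet, wronskianMatrix_update, hrow, Matrix.det_updateRow_sum, smul_eq_mul,
    wronskianDet]

theorem wronskianDet_update_sub_smul (v : Fin n → R[X]) {p r : Fin n} (hpr : p ≠ r) (c : R) :
    wronskianDet (Function.update v p (v p - c • v r)) = wronskianDet v := by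
  classical
  rw [wronskianDet_update_of_eq_sum v p (Pi.single p 1 - Pi.single r c),
    Pi.sub_apply, Pi.single_eq_same, Pi.single_eq_of_ne hpr, sub_zero, C_1, one_mul]
  simp [sub_smul, sum_sub_distrib, Pi.single_apply]

theorem pow_sub_dvd_wronskianDet {v : Fin n → R[X]} {q : R[X]} {m : ℕ} (r : Fin n)
    (h : q ^ m ∣ v r) : q ^ (m - (n - 1)) ∣ wronskianDet v := by
  rw [wronskianDet_eq_sum]
  refine dvd_sum fun σ _ => ?_
  rw [Units.smul_def, zsmul_eq_mul]
  refine Dvd.dvd.mul_left ?_ _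
  have hfactor : q ^ (m - (n - 1)) ∣ derivative^[σ⁻¹ r] (v (σ (σ⁻¹ r))) := by
    rw [← Equiv.Perm.mul_apply, mul_inv_cancel, Equiv.Perm.one_apply]
    exact (pow_dvd_pow q (by omega)).trans (pow_sub_dvd_iterate_derivative_of_pow_dvd _ h)
  exact hfactor.trans (dvd_prod_of_mem _ (mem_univ _))

theorem le_of_prod_iterate_derivative_ne_zero {v : Fin n → R[X]} {D : Fin n → ℕ}
    (hD : ∀ r, (v r).natDegree ≤ D r) {σ : Equiv.Perm (Fin n)}
    (h : ∏ t : Fin n, derivative^[t] (v (σ t)) ≠ 0) (t : Fin n) : (t : ℕ) ≤ D (σ t) := by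
  by_contra! ht
  exact h (prod_eq_zero (mem_univ t) (iterate_derivative_eq_zero ((hD _).trans_lt ht)))

theorem natDegree_prod_iterate_derivative_add_choose_two_le {v : Fin n → R[X]} {D : Fin n → ℕ}
    (hD : ∀ r, (v r).natDegree ≤ D r) {σ : Equiv.Perm (Fin n)}
    (h : ∏ t : Fin n, derivative^[t] (v (σ t)) ≠ 0) :
    (∏ t : Fin n, derivative^[t] (v (σ t))).natDegree + n.choose 2 ≤ ∑ r, D r := by
  rw [← Fin.sum_sub_val_add_choose_two_eq D σ (le_of_prod_iterate_derivative_ne_zero hD h)]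
  gcongr
  refine (natDegree_prod_le _ _).trans (sum_le_sum fun t _ => ?_)
  exact (natDegree_iterate_derivative _ _).trans (Nat.sub_le_sub_right (hD _) _)

theorem natDegree_wronskianDet_add_choose_two_le {v : Fin n → R[X]} (D : Fin n → ℕ)
    (hD : ∀ r, (v r).natDegree ≤ D r) (hW : wronskianDet v ≠ 0) :
    (wronskianDet v).natDegree + n.choose 2 ≤ ∑ r, D r := by
  rw [wronskianDet_eq_sum] at hW ⊢
  obtain ⟨σ₀, -, hσ₀⟩ := exists_ne_zero_of_sum_ne_zero hW
  have hchoose : n.choose 2 ≤ ∑ r, D r :=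
    le_add_self.trans (natDegree_prod_iterate_derivative_add_choose_two_le hD
      (right_ne_zero_of_smul hσ₀))
  suffices h : (∑ σ : Equiv.Perm (Fin n), Equiv.Perm.sign σ •
      ∏ t : Fin n, derivative^[t] (v (σ t))).natDegree ≤ ∑ r, D r - n.choose 2 by omega
  refine natDegree_sum_le_of_forall_le _ _ fun σ _ => (natDegree_smul_le _ _).trans ?_
  by_cases hσ : ∏ t : Fin n, derivative^[t] (v (σ t)) = 0
  · simp [hσ]
  · have := natDegree_prod_iterate_derivative_add_choose_two_le hD hσ
    omega

theorem coeff_wronskianDet (v : Fin n → R[X]) :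
    (wronskianDet v).coeff (∑ r, (v r).natDegree - n.choose 2) =
      (Matrix.of fun r (t : Fin n) => ((v r).natDegree.descFactorial t : R)).det *
        ∏ r, (v r).leadingCoeff := by
  set d : Fin n → ℕ := fun r => (v r).natDegree
  rw [wronskianDet_eq_sum, finsetSum_coeff, Matrix.det_apply, sum_mul]
  refine sum_congr rfl fun σ _ => ?_
  rw [Units.smul_def, coeff_smul, Units.smul_def, smul_mul_assoc]
  congr 1
  by_cases hσ : ∀ t : Fin n, (t : ℕ) ≤ d (σ t)
  · rw [← Fin.sum_sub_val_add_choose_two_eq d σ hσ, Nat.add_sub_cancel,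
      coeff_prod_sum_of_natDegree_le _ _ _ fun t _ => natDegree_iterate_derivative _ _]
    simp only [coeff_iterate_derivative_natDegree_sub, prod_mul_distrib, Matrix.of_apply]
    rw [Equiv.prod_comp σ fun r => (v r).leadingCoeff]
  · obtain ⟨t, ht⟩ := not_forall.mp hσ
    replace ht := not_le.mp ht
    rw [prod_eq_zero (mem_univ t) (iterate_derivative_eq_zero ht), coeff_zero,
      prod_eq_zero (mem_univ t) (by simp [d, Nat.descFactorial_eq_zero_iff_lt.mpr ht]), zero_mul]

theorem sum_natDegree_update_lt {ι : Type*} [Fintype ι] [DecidableEq ι] {v : ι → R[X]} {p : ι}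
    {q : R[X]} (hq : q.natDegree < (v p).natDegree) :
    ∑ t, (Function.update v p q t).natDegree < ∑ t, (v t).natDegree := by
  refine sum_lt_sum (fun t _ => ?_) ⟨p, mem_univ p, by simpa using hq⟩
  rcases eq_or_ne t p with rfl | h
  · simpa using hq.le
  · simp [h]

end CommRing

section Domain

variable {R : Type*} [CommRing R] [IsDomain R] [CharZero R] {n : ℕ}

theorem det_descFactorial_ne_zero {d : Fin n → ℕ} (hd : Function.Injective d) :
    (Matrix.of fun r (t : Fin n) => ((d r).descFactorial t : R)).det ≠ 0 := by
  have hM : (Matrix.of fun r (t : Fin n) => ((d r).descFactorial t : R)) =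
      Matrix.of fun r (t : Fin n) => (descPochhammer R t).eval (d r : R) := by
    ext r t
    simp [descPochhammer_eval_eq_descFactorial]
  rw [hM, ← Matrix.det_eval_matrixOfPolynomials_eq_det_vandermonde _ _
      (fun t => descPochhammer_natDegree R t) (fun t => monic_descPochhammer R t),
    Matrix.det_vandermonde_ne_zero_iff]
  exact Nat.cast_injective.comp hd

theorem wronskianDet_ne_zero_of_injective_natDegree {v : Fin n → R[X]} (hv : ∀ r, v r ≠ 0)
    (hd : Function.Injective fun r => (v r).natDegree) : wronskianDet v ≠ 0 := by
  intro hW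
  have hcoeff := coeff_wronskianDet v
  rw [hW, coeff_zero] at hcoeff
  exact mul_ne_zero (det_descFactorial_ne_zero hd)
    (prod_ne_zero_iff.mpr fun r _ => leadingCoeff_ne_zero.mpr (hv r)) hcoeff.symm

end Domain

section Field

variable {F : Type*} [Field F] {n : ℕ}

theorem natDegree_sub_smul_lt {p q : F[X]} (hdeg : p.natDegree = q.natDegree) (hp : p ≠ 0)
    (hq : q ≠ 0) (hne : p - (p.leadingCoeff / q.leadingCoeff) • q ≠ 0) :
    (p - (p.leadingCoeff / q.leadingCoeff) • q).natDegree < p.natDegree := by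
  have hc : p.leadingCoeff / q.leadingCoeff ≠ 0 :=
    div_ne_zero (leadingCoeff_ne_zero.mpr hp) (leadingCoeff_ne_zero.mpr hq)
  refine natDegree_lt_natDegree hne (degree_sub_lt_left ?_ hp ?_)
  · rw [smul_eq_C_mul, degree_C_mul hc, degree_eq_natDegree hp, degree_eq_natDegree hq, hdeg]
  · rw [smul_eq_C_mul, leadingCoeff_mul, leadingCoeff_C,
      div_mul_cancel₀ _ (leadingCoeff_ne_zero.mpr hq)]

/-- Row operations `v p ↦ v p - c • v r` keep the Wronskian and lower the total degree until the
degrees are distinct, where `coeff_wronskianDet` exhibits a nonzero coefficient. -/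
theorem wronskianDet_ne_zero_of_linearIndependent [CharZero F] {v : Fin n → F[X]}
    (hv : LinearIndependent F v) : wronskianDet v ≠ 0 := by
  induction hN : ∑ r, (v r).natDegree using Nat.strong_induction_on generalizing v with
  | _ N ih =>
  by_cases hd : Function.Injective fun r => (v r).natDegree
  · exact wronskianDet_ne_zero_of_injective_natDegree hv.ne_zero hd
  obtain ⟨p, r, hdeg, hpr⟩ := Function.not_injective_iff.mp hd
  set c := (v p).leadingCoeff / (v r).leadingCoeff
  have hw := hv.update_sub_smul hpr c
  rw [← wronskianDet_update_sub_smul v hpr c]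
  refine ih _ ?_ hw rfl
  rw [← hN]
  exact sum_natDegree_update_lt (natDegree_sub_smul_lt hdeg (hv.ne_zero p) (hv.ne_zero r)
    (by simpa using hw.ne_zero p))

theorem pow_sub_dvd_wronskianDet_of_mem_span {v : Fin n → F[X]} {q g : F[X]} {m : ℕ}
    (hq : q ∈ Submodule.span F (Set.range v)) (hq₀ : q ≠ 0) (h : g ^ m ∣ q) :
    g ^ (m - (n - 1)) ∣ wronskianDet v := by
  classical
  obtain ⟨c, hc⟩ := (Submodule.mem_span_range_iff_exists_fun F).mp hq
  obtain ⟨p, hp⟩ : ∃ p, c p ≠ 0 := by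
    by_contra! h0
    exact hq₀ (by simp [← hc, h0])
  have hupdate := pow_sub_dvd_wronskianDet (v := Function.update v p q) p (by simpa using h)
  rwa [wronskianDet_update_of_eq_sum v p c q hc.symm,
    (isUnit_C.mpr (isUnit_iff_ne_zero.mpr hp)).dvd_mul_left] at hupdate

theorem sum_le_natDegree_of_pow_dvd {ι : Type*} [Fintype ι] {a : ι → F}
    (ha : Function.Injective a) {m : ι → ℕ} {W : F[X]} (hW : W ≠ 0)
    (h : ∀ j, (X - C (a j)) ^ m j ∣ W) : ∑ j, m j ≤ W.natDegree := by
  have hprod :=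
    Fintype.prod_dvd_of_coprime (fun i j hij => (pairwise_coprime_X_sub_C ha hij).pow) h
  calc ∑ j, m j = (∏ j, (X - C (a j)) ^ m j).natDegree := by
        rw [natDegree_prod_of_monic _ _ fun j _ => (monic_X_sub_C _).pow _]
        simp
    _ ≤ W.natDegree := natDegree_le_of_dvd hprod hW

theorem lt_of_pow_dvd_of_mem_span [CharZero F] {b δ m₀ : ℕ} {v : Fin b → F[X]}
    (hv : LinearIndependent F v) {a : Fin b → F} (ha : Function.Injective a) {a₀ : F}
    (ha₀ : a₀ ∉ Set.range a) {m : Fin b → ℕ} (hdvd : ∀ t, (X - C (a t)) ^ m t ∣ v t)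
    (hdeg : ∀ t, (v t).natDegree ≤ m t + δ) {q : F[X]}
    (hq : q ∈ Submodule.span F (Set.range v)) (hq₀ : q ≠ 0) (hq_dvd : (X - C a₀) ^ m₀ ∣ q) :
    m₀ < b * δ + (b + 1).choose 2 := by
  have hb : b ≠ 0 := by
    rintro rfl
    simp only [Set.range_eq_empty, Submodule.span_empty, Submodule.mem_bot] at hq
    exact hq₀ hq
  have hW := wronskianDet_ne_zero_of_linearIndependent hv
  have hlow := sum_le_natDegree_of_pow_dvd (Fin.cons_injective_iff.mpr ⟨ha₀, ha⟩) hW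
    (m := Fin.cons (m₀ - (b - 1)) fun t => m t - (b - 1))
    (Fin.cases (pow_sub_dvd_wronskianDet_of_mem_span hq hq₀ hq_dvd)
      fun t => pow_sub_dvd_wronskianDet t (hdvd t))
  have hup := natDegree_wronskianDet_add_choose_two_le _ hdeg hW
  rw [Fin.sum_cons] at hlow
  rw [sum_add_distrib, sum_const, card_univ, Fintype.card_fin, smul_eq_mul] at hup
  have hm : ∑ t, m t ≤ ∑ t, (m t - (b - 1)) + b * (b - 1) := by
    calc ∑ t, m t ≤ ∑ t : Fin b, (m t - (b - 1) + (b - 1)) := sum_le_sum fun t _ => by omega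
      _ = ∑ t, (m t - (b - 1)) + b * (b - 1) := by simp [sum_add_distrib]
  have htwo : b * (b - 1) = 2 * b.choose 2 := by
    rw [Nat.choose_two_right, Nat.mul_div_cancel' (Nat.even_mul_pred_self b).two_dvd]
  have hsucc : (b + 1).choose 2 = b.choose 2 + b := by
    simp [Nat.choose_succ_succ', add_comm]
  omega

end Field

section SDE

variable {R : Type*} [CommRing R] {k : ℕ}

noncomputable def sdeOperator (P : Fin (k + 1) → R[X]) : R[X] →ₗ[R] R[X] :=
  ∑ j, LinearMap.mulLeft R (P j) ∘ₗ derivative ^ (j : ℕ)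

theorem sdeOperator_apply (P : Fin (k + 1) → R[X]) (g : R[X]) :
    sdeOperator P g = ∑ j, P j * derivative^[j] g := by
  simp [sdeOperator, Module.End.pow_apply]

theorem pow_sub_dvd_sdeOperator_apply (P : Fin (k + 1) → R[X]) {q g : R[X]} {m : ℕ}
    (h : q ^ m ∣ g) : q ^ (m - k) ∣ sdeOperator P g := by
  rw [sdeOperator_apply]
  refine dvd_sum fun j _ => dvd_mul_of_dvd_right ?_ _
  exact (pow_dvd_pow q (Nat.sub_le_sub_left (Nat.le_of_lt_succ j.isLt) m)).trans
    (pow_sub_dvd_iterate_derivative_of_pow_dvd j h)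

theorem natDegree_sdeOperator_apply_le {P : Fin (k + 1) → R[X]} {l : ℕ}
    (hP : ∀ j, (P j).natDegree ≤ j + l) (g : R[X]) :
    (sdeOperator P g).natDegree ≤ g.natDegree + l := by
  rw [sdeOperator_apply]
  refine natDegree_sum_le_of_forall_le _ _ fun j _ => ?_
  rcases le_or_gt (j : ℕ) g.natDegree with hj | hj
  · have hPj := hP j
    have hderiv := natDegree_iterate_derivative g j
    exact natDegree_mul_le.trans (by omega)
  · simp [iterate_derivative_eq_zero hj]

end SDE

end Polynomial

theorem stmt15_general {F : Type*} [Field F] [CharZero F] {s k l : ℕ}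
    (α a : Fin s → F) (e : Fin s → ℕ) (hα : ∀ i, α i ≠ 0) (ha : Function.Injective a)
    (f : F[X]) (hf : f = ∑ i, C (α i) * (X - C (a i)) ^ e i)
    (P : Fin (k + 1) → F[X])
    (hdeg : ∀ j, (P j).natDegree ≤ (j : ℕ) + l)
    (hSDE : ∑ j, P j * derivative^[(j : ℕ)] f = 0) :
    ∀ i, k + (k + l) * (s - 1) + s.choose 2 ≤ e i →
      ∑ j, P j * derivative^[(j : ℕ)] ((X - C (a i)) ^ e i) = 0 := by
  classical
  intro i hi
  let h : Fin s → F[X] := fun j => α j • sdeOperator P ((X - C (a j)) ^ e j)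
  suffices h i = 0 by simpa [h, hα i, sdeOperator_apply] using this
  by_contra hi₀
  have hsum : ∑ j, h j = 0 := by
    rw [← hSDE, ← sdeOperator_apply, hf]
    simp only [h, ← smul_eq_C_mul, map_sum, map_smul]
  have hdvd : ∀ j, (X - C (a j)) ^ (e j - k) ∣ h j := fun j =>
    (pow_sub_dvd_sdeOperator_apply P dvd_rfl).trans (by simp [h, smul_eq_C_mul])
  have hdegh : ∀ j, (h j).natDegree ≤ (e j - k) + (k + l) := fun j => by
    have hLj := natDegree_sdeOperator_apply_le hdeg ((X - C (a j)) ^ e j)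
    rw [natDegree_pow, natDegree_X_sub_C, mul_one] at hLj
    exact ((natDegree_smul_le (α j) _).trans hLj).trans (by omega)
  obtain ⟨b, g, hg, hli, hmem⟩ := exists_linearIndependent_fin_of_mem_span
    (mem_span_range_subtype_ne_of_sum_eq_zero (R := F) hsum i)
  have hlt := lt_of_pow_dvd_of_mem_span hli (ha.comp (Subtype.val_injective.comp hg))
    (a₀ := a i) (by rintro ⟨t, ht⟩; exact (g t).2 (ha ht)) (fun t => hdvd (g t))
    (fun t => hdegh (g t)) hmem hi₀ (hdvd i)
  have hb : b + 1 ≤ s := by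
    have hcard := Fintype.card_le_of_injective g hg
    simp only [Fintype.card_fin, Fintype.card_subtype_compl, Fintype.card_unique] at hcard
    have hs := i.pos
    omega
  have hchoose := Nat.choose_le_choose 2 hb
  have hmul := Nat.mul_le_mul_right (k + l) (Nat.le_sub_one_of_lt hb)
  rw [mul_comm (k + l)] at hi
  omega

theorem stmt15 {F : Type*} [Field F] [CharZero F] {s k l : ℕ}
    (α a : Fin s → F) (e : Fin s → ℕ) (hα : ∀ i, α i ≠ 0) (ha : Function.Injective a)
    (f : F[X]) (hf : f = ∑ i, C (α i) * (X - C (a i)) ^ e i)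
    (P : Fin (k + 1) → F[X]) (hP : P ≠ 0)
    (hdeg : ∀ j, (P j).natDegree ≤ (j : ℕ) + l)
    (hSDE : ∑ j, P j * derivative^[(j : ℕ)] f = 0) :
    ∀ i, k + (k + l) * (s - 1) + s.choose 2 ≤ e i →
      ∑ j, P j * derivative^[(j : ℕ)] ((X - C (a i)) ^ e i) = 0 :=
  stmt15_general α a e hα ha f hf P hdeg hSDE
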